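/- arXiv:1310.4725 — 2 statements merged into one kernel-verified Lean document; each statement's English description precedes it below -/
import Mathlib

section
/- Gaussian aperture integral: for positive reals b_eff, L, L_y−L, ω, c₀ and points x_q, y ∈ ℝ², define α = ω²b_eff²/(4c₀²L²) and β = ωL_y/(2c₀L(L_y−L)). Then ∫_{ℝ²} exp(iω|y−x|²/(2c₀(L_y−L))) · exp(iω(|x|²−|x_q|²)/(2c₀L)) · exp(−α|x−x_q|²) dx = π/(α − iβ) · exp( −(ω²/(4c₀²))|x_q/L + (x_q−y)/(L_y−L)|²/(α − iβ) + iω|x_q−y|²/(2c₀(L_y−L)) ). -/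
/-!
Writing `x = xq + v`, the two Fresnel phases with curvatures `a = ω / (2 c₀ (L_y - L))` and
`b = ω / (2 c₀ L)` combine with the Gaussian weight into
`-(α - i (a + b)) ‖v‖² + 2 i ⟪b xq + a (xq - y), v⟫ + i a ‖xq - y‖²`, and `a + b = β`.
The complex Gaussian integral over `ℝ²` then gives `π / (α - i β) · exp (-‖w‖² / (α - i β))`
with `w = b xq + a (xq - y) = (ω / (2 c₀)) (xq / L + (xq - y) / (L_y - L))`.
-/

open Complex Real MeasureTheory
open scoped RealInnerProductSpace

section Aperture

variable {V : Type*} [NormedAddCommGroup V] [InnerProductSpace ℝ V]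

theorem aperture_phase_eq_shifted_quadratic (a b α : ℝ) (xq y x : V) :
    I * a * ((‖y - x‖ ^ 2 : ℝ) : ℂ) + I * b * ((‖x‖ ^ 2 - ‖xq‖ ^ 2 : ℝ) : ℂ)
        - α * ((‖x - xq‖ ^ 2 : ℝ) : ℂ)
      = -(α - I * (a + b)) * ((‖x - xq‖ ^ 2 : ℝ) : ℂ)
          + 2 * I * (⟪b • xq + a • (xq - y), x - xq⟫ : ℝ)
          + I * a * ((‖xq - y‖ ^ 2 : ℝ) : ℂ) := by
  obtain ⟨v, rfl⟩ : ∃ v, x = xq + v := ⟨x - xq, by abel⟩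
  have hy : y - (xq + v) = (y - xq) - v := by abel
  rw [hy, norm_sub_sq_real, norm_add_sq_real, add_sub_cancel_left, inner_add_left,
    real_inner_smul_left, real_inner_smul_left, ← norm_neg (y - xq), neg_sub,
    ← neg_sub xq y, inner_neg_left]
  push_cast
  ring

variable [FiniteDimensional ℝ V] [MeasurableSpace V] [BorelSpace V]

theorem integral_cexp_neg_mul_sq_norm_sub_add {b : ℂ} (hb : 0 < b.re) (c : ℂ) (w x₀ : V) :
    ∫ x : V, cexp (-b * ‖x - x₀‖ ^ 2 + c * ⟪w, x - x₀⟫) =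
      (π / b) ^ (Module.finrank ℝ V / 2 : ℂ) * cexp (c ^ 2 * ‖w‖ ^ 2 / (4 * b)) := by
  rw [integral_sub_right_eq_self (fun v ↦ cexp (-b * ‖v‖ ^ 2 + c * ⟪w, v⟫)) x₀]
  exact GaussianFourier.integral_cexp_neg_mul_sq_norm_add hb c w

theorem integral_aperture {a b α : ℝ} (hα : 0 < α) (xq y : V) :
    ∫ x : V, cexp (I * a * ((‖y - x‖ ^ 2 : ℝ) : ℂ))
        * cexp (I * b * ((‖x‖ ^ 2 - ‖xq‖ ^ 2 : ℝ) : ℂ))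
        * cexp (-α * ((‖x - xq‖ ^ 2 : ℝ) : ℂ))
      = (π / (α - I * (a + b))) ^ (Module.finrank ℝ V / 2 : ℂ)
          * cexp (-((‖b • xq + a • (xq - y)‖ ^ 2 : ℝ) : ℂ) / (α - I * (a + b))
            + I * a * ((‖xq - y‖ ^ 2 : ℝ) : ℂ)) := by
  have hB : 0 < (α - I * (a + b) : ℂ).re := by simpa using hα
  have hintegrand : ∀ x : V, cexp (I * a * ((‖y - x‖ ^ 2 : ℝ) : ℂ))
        * cexp (I * b * ((‖x‖ ^ 2 - ‖xq‖ ^ 2 : ℝ) : ℂ))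
        * cexp (-α * ((‖x - xq‖ ^ 2 : ℝ) : ℂ))
      = cexp (I * a * ((‖xq - y‖ ^ 2 : ℝ) : ℂ))
        * cexp (-(α - I * (a + b)) * ‖x - xq‖ ^ 2
          + 2 * I * ⟪b • xq + a • (xq - y), x - xq⟫) := by
    intro x
    rw [← Complex.exp_add, ← Complex.exp_add, ← Complex.exp_add]
    congr 1
    linear_combination (norm := (push_cast; ring))
      aperture_phase_eq_shifted_quadratic a b α xq y x
  simp only [hintegrand, integral_const_mul, integral_cexp_neg_mul_sq_norm_sub_add hB]
  rw [mul_left_comm, ← Complex.exp_add]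
  have hB0 : (α - I * (a + b) : ℂ) ≠ 0 := fun h ↦ by simp [h] at hB
  congr 2
  rw [mul_pow, I_sq]
  field_simp
  push_cast
  ring

end Aperture

/-- Gaussian aperture integral over `ℝ²` with complex quadratic phase. -/
theorem gaussian_aperture_integral
    (b_eff L L_y ω c₀ : ℝ)
    (hb : 0 < b_eff) (hL : 0 < L) (hLy : L < L_y) (hω : 0 < ω) (hc : 0 < c₀)
    (xq y : EuclideanSpace ℝ (Fin 2))
    (α β : ℝ)
    (hα : α = ω ^ 2 * b_eff ^ 2 / (4 * c₀ ^ 2 * L ^ 2))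
    (hβ : β = ω * L_y / (2 * c₀ * L * (L_y - L))) :
    (∫ x : EuclideanSpace ℝ (Fin 2),
        Complex.exp (Complex.I * (ω : ℂ) * ((‖y - x‖ ^ 2 : ℝ) : ℂ) /
            (2 * (c₀ : ℂ) * ((L_y : ℂ) - (L : ℂ))))
          * Complex.exp (Complex.I * (ω : ℂ) * (((‖x‖ ^ 2 - ‖xq‖ ^ 2 : ℝ)) : ℂ) /
            (2 * (c₀ : ℂ) * (L : ℂ)))
          * Complex.exp (-(α : ℂ) * ((‖x - xq‖ ^ 2 : ℝ) : ℂ)))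
      = (π : ℂ) / ((α : ℂ) - Complex.I * (β : ℂ))
          * Complex.exp (
              -(((ω ^ 2 / (4 * c₀ ^ 2) : ℝ) : ℂ)
                  * ((‖(1 / L) • xq + (1 / (L_y - L)) • (xq - y)‖ ^ 2 : ℝ) : ℂ))
                / ((α : ℂ) - Complex.I * (β : ℂ))
              + Complex.I * (ω : ℂ) * ((‖xq - y‖ ^ 2 : ℝ) : ℂ)
                / (2 * (c₀ : ℂ) * ((L_y : ℂ) - (L : ℂ)))) := by
  have hα_pos : 0 < α := by rw [hα]; positivity
  have hLyL : L_y - L ≠ 0 := sub_ne_zero.mpr hLy.ne'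
  have hphase_a (z : ℂ) : I * ω * z / (2 * c₀ * (L_y - L))
      = I * ((ω / (2 * c₀ * (L_y - L)) : ℝ) : ℂ) * z := by
    push_cast
    ring
  have hphase_b (z : ℂ) : I * ω * z / (2 * c₀ * L)
      = I * ((ω / (2 * c₀ * L) : ℝ) : ℂ) * z := by
    push_cast
    ring
  have hβ_eq : (β : ℂ)
      = ((ω / (2 * c₀ * (L_y - L)) : ℝ) : ℂ) + ((ω / (2 * c₀ * L) : ℝ) : ℂ) := by
    rw [← ofReal_add, hβ]
    congr 1
    field_simp
    ring
  have hw : (ω / (2 * c₀ * L)) • xq + (ω / (2 * c₀ * (L_y - L))) • (xq - y)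
      = (ω / (2 * c₀)) • ((1 / L) • xq + (1 / (L_y - L)) • (xq - y)) := by
    simp only [smul_add, smul_smul, div_mul_div_comm, mul_one]
  have hw_norm : ‖(ω / (2 * c₀)) • ((1 / L) • xq + (1 / (L_y - L)) • (xq - y))‖ ^ 2
      = ω ^ 2 / (4 * c₀ ^ 2) * ‖(1 / L) • xq + (1 / (L_y - L)) • (xq - y)‖ ^ 2 := by
    rw [norm_smul, mul_pow, Real.norm_eq_abs, sq_abs]
    ring
  simp only [hphase_a, hphase_b]
  rw [integral_aperture hα_pos, finrank_euclideanSpace_fin, hw, hw_norm, hβ_eq]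
  push_cast
  norm_num
end

section
/- Three-term recurrence for the P_n polynomials: with P₀(u)=1 and P₁(u)=3/4−u², the polynomials P_n(u)=Σ_{j=0}^n C(n,j)(−1)^j K_j(u), where K₀=1 and K_n(u)=∏_{j=1}^n (1/j²)(u²+(j−1/2)²), satisfy (n+1)² P_{n+1}(u) = (2n²+2n+3/4−u²) P_n(u) − n² P_{n−1}(u) for all n ≥ 1 and all u ∈ ℝ. -/
open Real

noncomputable def Kpoly (n : ℕ) (u : ℝ) : ℝ :=
  ∏ j ∈ Finset.Icc 1 n, (1 / (j : ℝ) ^ 2) * (u ^ 2 + ((j : ℝ) - 1 / 2) ^ 2)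

noncomputable def Ppoly (n : ℕ) (u : ℝ) : ℝ :=
  ∑ j ∈ Finset.range (n + 1), (n.choose j : ℝ) * (-1) ^ j * Kpoly j u

lemma Kpoly_succ (j : ℕ) (u : ℝ) :
    Kpoly (j + 1) u
      = 1 / ((j : ℝ) + 1) ^ 2 * (u ^ 2 + (((j : ℝ) + 1) - 1 / 2) ^ 2) * Kpoly j u := by
  unfold Kpoly
  rw [Finset.prod_Icc_succ_top (by omega : 1 ≤ j + 1)]
  push_cast
  ring

lemma u2_Kpoly (j : ℕ) (u : ℝ) :
    u ^ 2 * Kpoly j u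
      = ((j : ℝ) + 1) ^ 2 * Kpoly (j + 1) u - ((j : ℝ) + 1 / 2) ^ 2 * Kpoly j u := by
  have hne : ((j : ℝ) + 1) ≠ 0 := by positivity
  rw [Kpoly_succ]
  field_simp
  ring

lemma key (n j : ℕ) (hn : 1 ≤ n) (hj : j ≤ n + 1) :
    ((n : ℝ) + 1) ^ 2 * ((n + 1).choose j : ℝ)
      = (2 * (n : ℝ) ^ 2 + 2 * (n : ℝ) + 1 + (j : ℝ) ^ 2 + (j : ℝ)) * (n.choose j : ℝ)
        + (j : ℝ) ^ 2 * (n.choose (j - 1) : ℝ)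
        - (n : ℝ) ^ 2 * ((n - 1).choose j : ℝ) := by
  rcases Nat.eq_zero_or_pos j with rfl | hj1
  · simp
    ring
  · obtain ⟨i, rfl⟩ : ∃ i, j = i + 1 := ⟨j - 1, by omega⟩
    rcases lt_trichotomy (i + 1) n with hlt | rfl | hgt
    · -- generic case: 1 ≤ j ≤ n-1
      obtain ⟨d, rfl⟩ : ∃ d, n = i + d + 2 := ⟨n - i - 2, by omega⟩
      have h1 : (i + d + 1).choose (i + 1) * (i + d + 1 + 1) =
          (i + d + 1 + 1).choose (i + 1) * (d + 1) := by
        have := Nat.choose_mul_succ_eq (i + d + 1) (i + 1)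
        rwa [show i + d + 1 + 1 - (i + 1) = d + 1 from by omega] at this
      have h2 : (i + d + 2).choose (i + 1) * (i + d + 2 + 1) =
          (i + d + 2 + 1).choose (i + 1) * (d + 2) := by
        have := Nat.choose_mul_succ_eq (i + d + 2) (i + 1)
        rwa [show i + d + 2 + 1 - (i + 1) = d + 2 from by omega] at this
      have h3 : (i + d + 2).choose (i + 1) * (i + 1) =
          (i + d + 2).choose i * (d + 2) := by
        have := Nat.choose_succ_right_eq (i + d + 2) i
        rwa [show i + d + 2 - i = d + 2 from by omega] at this
      have e1 : ((i + d + 1).choose (i + 1) : ℝ) * ((i : ℝ) + (d : ℝ) + 2) =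
          ((i + d + 2).choose (i + 1) : ℝ) * ((d : ℝ) + 1) := by
        exact_mod_cast congrArg (Nat.cast : ℕ → ℝ) h1
      have e2 : ((i + d + 2).choose (i + 1) : ℝ) * ((i : ℝ) + (d : ℝ) + 3) =
          ((i + d + 3).choose (i + 1) : ℝ) * ((d : ℝ) + 2) := by
        exact_mod_cast congrArg (Nat.cast : ℕ → ℝ) h2
      have e3 : ((i + d + 2).choose (i + 1) : ℝ) * ((i : ℝ) + 1) =
          ((i + d + 2).choose i : ℝ) * ((d : ℝ) + 2) := by
        exact_mod_cast congrArg (Nat.cast : ℕ → ℝ) h3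
      have hd2 : ((d : ℝ) + 2) ≠ 0 := by positivity
      apply mul_left_cancel₀ hd2
      have hsub1 : i + d + 2 - 1 = i + d + 1 := by omega
      have hsub2 : i + 1 - 1 = i := by omega
      rw [hsub1, hsub2, show i + d + 2 + 1 = i + d + 3 from by omega]
      push_cast
      linear_combination (-(((i : ℝ) + (d : ℝ) + 3)) ^ 2) * e2 + ((i : ℝ) + 1) ^ 2 * e3
        + (((d : ℝ) + 2) * ((i : ℝ) + (d : ℝ) + 2)) * e1
    · -- j = n
      simp only [Nat.add_sub_cancel, Nat.choose_succ_self_right, Nat.choose_self,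
        Nat.choose_succ_self, Nat.cast_zero, Nat.cast_one]
      push_cast
      ring
    · -- j = n + 1
      obtain rfl : i = n := by omega
      rw [Nat.choose_self, Nat.add_sub_cancel, Nat.choose_self,
        Nat.choose_eq_zero_of_lt (by omega), Nat.choose_eq_zero_of_lt (by omega)]
      push_cast
      ring

/-- Three-term recurrence for the polynomials `P_n`:
`(n+1)² P_{n+1}(u) = (2n²+2n+3/4−u²) P_n(u) − n² P_{n−1}(u)`, together with
the initial values `P₀(u) = 1` and `P₁(u) = 3/4 − u²`. -/
theorem Ppoly_recurrence :
    (∀ u : ℝ, Ppoly 0 u = 1) ∧ (∀ u : ℝ, Ppoly 1 u = 3 / 4 - u ^ 2) ∧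
    ∀ n : ℕ, 1 ≤ n → ∀ u : ℝ,
      ((n : ℝ) + 1) ^ 2 * Ppoly (n + 1) u
        = (2 * (n : ℝ) ^ 2 + 2 * (n : ℝ) + 3 / 4 - u ^ 2) * Ppoly n u
          - (n : ℝ) ^ 2 * Ppoly (n - 1) u := by
  refine ⟨?_, ?_, ?_⟩
  · intro u
    simp [Ppoly, Kpoly]
  · intro u
    simp [Ppoly, Finset.sum_range_succ, Kpoly]
    norm_num
    ring
  · intro n hn u
    obtain ⟨m, rfl⟩ : ∃ m, n = m + 1 := ⟨n - 1, by omega⟩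
    simp only [Nat.add_sub_cancel]
    push_cast
    have hP2 : Ppoly (m + 1 + 1) u
        = ∑ j ∈ Finset.range (m + 3), ((m + 2).choose j : ℝ) * (-1) ^ j * Kpoly j u := rfl
    have hPn : Ppoly (m + 1) u
        = ∑ j ∈ Finset.range (m + 3), ((m + 1).choose j : ℝ) * (-1) ^ j * Kpoly j u := by
      rw [Ppoly, Finset.sum_range_succ
        (f := fun j => ((m + 1).choose j : ℝ) * (-1) ^ j * Kpoly j u) (n := m + 2),
        Nat.choose_eq_zero_of_lt (by omega)]
      simp
    have hPm : Ppoly m u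
        = ∑ j ∈ Finset.range (m + 3), (m.choose j : ℝ) * (-1) ^ j * Kpoly j u := by
      rw [Ppoly, Finset.sum_range_succ
        (f := fun j => (m.choose j : ℝ) * (-1) ^ j * Kpoly j u) (n := m + 2),
        Finset.sum_range_succ
        (f := fun j => (m.choose j : ℝ) * (-1) ^ j * Kpoly j u) (n := m + 1),
        Nat.choose_eq_zero_of_lt (by omega), Nat.choose_eq_zero_of_lt (by omega)]
      simp
    have hu2P : u ^ 2 * Ppoly (m + 1) u
        = (∑ j ∈ Finset.range (m + 3),
            ((m + 1).choose j : ℝ) * (-1) ^ j * ((j : ℝ) + 1) ^ 2 * Kpoly (j + 1) u)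
          - ∑ j ∈ Finset.range (m + 3),
            ((m + 1).choose j : ℝ) * (-1) ^ j * ((j : ℝ) + 1 / 2) ^ 2 * Kpoly j u := by
      rw [hPn, Finset.mul_sum, ← Finset.sum_sub_distrib]
      refine Finset.sum_congr rfl fun j _ => ?_
      linear_combination (((m + 1).choose j : ℝ) * (-1) ^ j) * u2_Kpoly j u
    have hshift : ∑ j ∈ Finset.range (m + 3),
          (j : ℝ) ^ 2 * ((m + 1).choose (j - 1) : ℝ) * (-1) ^ j * Kpoly j u
        = -∑ j ∈ Finset.range (m + 3),
              ((m + 1).choose j : ℝ) * (-1) ^ j * ((j : ℝ) + 1) ^ 2 * Kpoly (j + 1) u := by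
      rw [Finset.sum_range_succ
        (f := fun j => ((m + 1).choose j : ℝ) * (-1) ^ j * ((j : ℝ) + 1) ^ 2 * Kpoly (j + 1) u)
        (n := m + 2),
        Finset.sum_range_succ'
        (f := fun j => (j : ℝ) ^ 2 * ((m + 1).choose (j - 1) : ℝ) * (-1) ^ j * Kpoly j u)
        (n := m + 2),
        Nat.choose_eq_zero_of_lt (by omega : m + 1 < m + 2)]
      simp only [Nat.cast_zero, Nat.cast_ofNat, ne_eq, zero_pow, mul_zero, zero_mul, add_zero,
        Nat.add_sub_cancel, Nat.cast_add, Nat.cast_one, pow_succ]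
      rw [← Finset.sum_neg_distrib]
      refine Finset.sum_congr rfl fun i _ => ?_
      ring
    calc ((m : ℝ) + 1 + 1) ^ 2 * Ppoly (m + 1 + 1) u
        = ∑ j ∈ Finset.range (m + 3),
            ((m : ℝ) + 1 + 1) ^ 2 * (((m + 2).choose j : ℝ) * (-1) ^ j * Kpoly j u) := by
          rw [hP2, Finset.mul_sum]
      _ = ∑ j ∈ Finset.range (m + 3),
            ((2 * ((m : ℝ) + 1) ^ 2 + 2 * ((m : ℝ) + 1) + 3 / 4)
                * (((m + 1).choose j : ℝ) * (-1) ^ j * Kpoly j u)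
              + ((m + 1).choose j : ℝ) * (-1) ^ j * ((j : ℝ) + 1 / 2) ^ 2 * Kpoly j u
              + (j : ℝ) ^ 2 * ((m + 1).choose (j - 1) : ℝ) * (-1) ^ j * Kpoly j u
              - ((m : ℝ) + 1) ^ 2 * ((m.choose j : ℝ) * (-1) ^ j * Kpoly j u)) := by
          refine Finset.sum_congr rfl fun j hj => ?_
          have hj' : j ≤ (m + 1) + 1 := by
            have := Finset.mem_range.mp hj; omega
          have hk := key (m + 1) j (by omega) hj'
          push_cast at hk
          linear_combination ((-1 : ℝ) ^ j * Kpoly j u) * hk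
      _ = (2 * ((m : ℝ) + 1) ^ 2 + 2 * ((m : ℝ) + 1) + 3 / 4) * Ppoly (m + 1) u
            + (∑ j ∈ Finset.range (m + 3),
                ((m + 1).choose j : ℝ) * (-1) ^ j * ((j : ℝ) + 1 / 2) ^ 2 * Kpoly j u)
            + (∑ j ∈ Finset.range (m + 3),
                (j : ℝ) ^ 2 * ((m + 1).choose (j - 1) : ℝ) * (-1) ^ j * Kpoly j u)
            - ((m : ℝ) + 1) ^ 2 * Ppoly m u := by
          rw [hPn, hPm, Finset.mul_sum, Finset.mul_sum, ← Finset.sum_add_distrib,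
            ← Finset.sum_add_distrib, ← Finset.sum_sub_distrib]
      _ = (2 * ((m : ℝ) + 1) ^ 2 + 2 * ((m : ℝ) + 1) + 3 / 4 - u ^ 2) * Ppoly (m + 1) u
            - ((m : ℝ) + 1) ^ 2 * Ppoly m u := by
          rw [hshift]
          linear_combination hu2P
end
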